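/- arXiv:1908.03221 — 3 statements merged into one kernel-verified Lean document; each statement's English description precedes it below -/
import Mathlib

section
/- Let f ∈ S be homogeneous of degree d and suppose f = g_0·h_0 + … + g_r·h_r, where each g_i is homogeneous of degree d_i with d_i ≥ 1 and each h_i is homogeneous of degree d − d_i. Let m ∈ ℕ satisfy d_i < d − m for all i (note this forces m ≤ d − 2). Then for every u ≤ m, the degree-u homogeneous part of the ideal (g_0,…,g_r, h_0,…,h_r, ∂f/∂x_0,…,∂f/∂x_N) equals the degree-u homogeneous part of the ideal (g_0,…,g_r). (This is the explicit algebraic form of Corollary 2.8 of the paper, obtained by substituting the description of the ideal Ĩ_{[Y]} from Corollary 2.7: for a complete intersection Y = Z(g_0,…,g_r) inside the hypersurface Z(f), the low-degree part of Ĩ_{[Y]} recovers the ideal of Y.) -/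
open MvPolynomial

lemma homogeneousComponent_mul_mem {σ : Type*} (u e : ℕ)
    (c q : MvPolynomial σ ℂ) (hq : q.IsHomogeneous e)
    (I : Ideal (MvPolynomial σ ℂ)) (hmem : u < e ∨ q ∈ I) :
    homogeneousComponent u (c * q) ∈ I := by
  rw [← sum_homogeneousComponent c, Finset.sum_mul, map_sum]
  apply Ideal.sum_mem
  intro i _
  have hterm : ((homogeneousComponent i c) * q).IsHomogeneous (i + e) :=
    (homogeneousComponent_isHomogeneous i c).mul hq
  rw [homogeneousComponent_of_mem (mem_homogeneousSubmodule _ _ |>.mpr hterm)]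
  split_ifs with hcase
  · rcases hmem with hlt | hqI
    · omega
    · exact Ideal.mul_mem_left I _ hqI
  · exact Ideal.zero_mem I

/-- Explicit form of Corollary 2.8: let `f = ∑ g_i * h_i` be homogeneous of degree `d`,
with `g_i` homogeneous of degree `d_i ≥ 1` and `h_i` homogeneous of degree `d - d_i`.
If `d_i < d - m` for all `i`, then in every degree `u ≤ m` the ideal
`(g_0, …, g_r, h_0, …, h_r, ∂f/∂x_0, …, ∂f/∂x_N)` agrees with the ideal `(g_0, …, g_r)`. -/
theorem low_degree_part_recovers_ideal (N r d m : ℕ)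
    (f : MvPolynomial (Fin (N + 1)) ℂ) (hf : f.IsHomogeneous d)
    (g h : Fin (r + 1) → MvPolynomial (Fin (N + 1)) ℂ)
    (dd : Fin (r + 1) → ℕ)
    (hdd : ∀ i, 1 ≤ dd i)
    (hg : ∀ i, (g i).IsHomogeneous (dd i))
    (hh : ∀ i, (h i).IsHomogeneous (d - dd i))
    (hsum : f = ∑ i, g i * h i)
    (hm : ∀ i, dd i < d - m) :
    ∀ u : ℕ, u ≤ m →
      ∀ p : MvPolynomial (Fin (N + 1)) ℂ, p.IsHomogeneous u →
        (p ∈ Ideal.span (Set.range g ∪ Set.range h ∪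
            Set.range (fun j : Fin (N + 1) => MvPolynomial.pderiv j f)) ↔
          p ∈ Ideal.span (Set.range g)) := by
  intro u hu p hp
  constructor
  · intro hmem
    -- rewrite the union of ranges as the range of one function
    set v : Fin (r + 1) ⊕ Fin (r + 1) ⊕ Fin (N + 1) → MvPolynomial (Fin (N + 1)) ℂ :=
      Sum.elim g (Sum.elim h (fun j => MvPolynomial.pderiv j f)) with hv
    have hset : (Set.range g ∪ Set.range h ∪
        Set.range (fun j : Fin (N + 1) => MvPolynomial.pderiv j f)) = Set.range v := by
      rw [hv, Set.Sum.elim_range, Set.Sum.elim_range, Set.union_assoc]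
    rw [hset, Ideal.mem_span_range_iff_exists_fun] at hmem
    obtain ⟨c, hc⟩ := hmem
    have hpcomp : p = homogeneousComponent u p := by
      rw [homogeneousComponent_of_mem (mem_homogeneousSubmodule _ _ |>.mpr hp), if_pos rfl]
    rw [hpcomp, ← hc, map_sum, Fintype.sum_sum_type]
    apply Submodule.add_mem
    · -- the `g` part
      apply Ideal.sum_mem
      intro i _
      exact homogeneousComponent_mul_mem u (dd i) _ _ (hg i) _
        (Or.inr (Ideal.subset_span (Set.mem_range_self i)))
    · rw [Fintype.sum_sum_type]
      apply Submodule.add_mem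
      · -- the `h` part: degrees are too big
        apply Ideal.sum_mem
        intro i _
        exact homogeneousComponent_mul_mem u (d - dd i) _ _ (hh i) _
          (Or.inl (by have := hm i; have := hdd i; omega))
      · -- the derivative part
        apply Ideal.sum_mem
        intro j _
        have hder : c (Sum.inr (Sum.inr j)) * MvPolynomial.pderiv j f =
            ∑ i, ((c (Sum.inr (Sum.inr j)) * MvPolynomial.pderiv j (g i)) * h i +
              (c (Sum.inr (Sum.inr j)) * MvPolynomial.pderiv j (h i)) * g i) := by
          simp only [hv, Sum.elim_inr, hsum, map_sum, MvPolynomial.pderiv_mul,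
            Finset.mul_sum]
          congr 1
          ext i
          ring_nf
        simp only [hv, Sum.elim_inr]
        rw [hder, map_sum]
        apply Ideal.sum_mem
        intro i _
        rw [map_add]
        apply Submodule.add_mem
        · exact homogeneousComponent_mul_mem u (d - dd i) _ _ (hh i) _
            (Or.inl (by have := hm i; have := hdd i; omega))
        · exact homogeneousComponent_mul_mem u (dd i) _ _ (hg i) _
            (Or.inr (Ideal.subset_span (Set.mem_range_self i)))
  · intro hmem
    refine Ideal.span_mono ?_ hmem
    exact fun x hx => Or.inl (Or.inl hx)
end

section
/- The quartic surface X = Z(x⁴ + x³z − xy³ + y⁴ + z⁴ + w⁴) ⊂ ℙ³_ℂ contains no lines. Precisely: define f : ℂ⁴ → ℂ by f(x,y,z,w) = x⁴ + x³z − xy³ + y⁴ + z⁴ + w⁴; then for every pair of ℂ-linearly independent vectors u, v ∈ ℂ⁴ there exist s, t ∈ ℂ with f(s·u + t·v) ≠ 0. (This is the first step of the proof of Proposition 3.1 of the paper.) -/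
private lemma bqz (e0 e1 e2 e3 e4 : ℂ)
    (h : ∀ s t : ℂ, e4*s^4 + e3*s^3*t + e2*s^2*t^2 + e1*s*t^3 + e0*t^4 = 0) :
    e4 = 0 ∧ e3 = 0 ∧ e2 = 0 ∧ e1 = 0 ∧ e0 = 0 := by
  have h10 := h 1 0
  have h01 := h 0 1
  have h11 := h 1 1
  have hm11 := h (-1) 1
  have h21 := h 2 1
  refine ⟨by linear_combination h10,
    by linear_combination (-2)*h10 + (1/2)*h01 + (-1/2)*h11 + (-1/6)*hm11 + (1/6)*h21,
    by linear_combination (-1)*h10 + (-1)*h01 + (1/2)*h11 + (1/2)*hm11,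
    by linear_combination 2*h10 + (-1/2)*h01 + h11 + (-1/3)*hm11 + (-1/6)*h21,
    by linear_combination h01⟩

private lemma L3 (a' b' c c' d' : ℂ) (hc : c ≠ 0)
    (H : ∀ s t : ℂ, (t*a')^4 + (t*a')^3*(s*c+t*c') - (t*a')*(t*b')^3 + (t*b')^4
      + (s*c+t*c')^4 + (t*d')^4 = 0) : False := by
  obtain ⟨hC4, _, _, _, _⟩ := bqz (a'^4 + a'^3*c' - a'*b'^3 + b'^4 + c'^4 + d'^4)
    (a'^3*c + 4*c*c'^3) (6*c^2*c'^2) (4*c^3*c') (c^4)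
    (fun s t => by linear_combination H s t)
  exact hc (pow_eq_zero_iff (by norm_num : (4:ℕ) ≠ 0) |>.mp hC4)

private lemma L2 (a' c c' : ℂ)
    (H : ∀ s t : ℂ, (t*a')^4 + (t*a')^3*(s*c+t*c') - (t*a')*s^3 + s^4
      + (s*c+t*c')^4 + t^4 = 0) : False := by
  obtain ⟨hC4, hC3, hC2, hC1, hC0⟩ := bqz (a'^4 + a'^3*c' + c'^4 + 1)
    (a'^3*c + 4*c*c'^3) (6*c^2*c'^2) (-a' + 4*c^3*c') (1 + c^4)
    (fun s t => by linear_combination H s t)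
  have hc : c ≠ 0 := by intro h; rw [h] at hC4; norm_num at hC4
  have h2 : (c*c')^2 = 0 := by linear_combination (1/6) * hC2
  have hcc : c * c' = 0 := pow_eq_zero_iff (by norm_num : (2:ℕ) ≠ 0) |>.mp h2
  have hc'0 : c' = 0 := (mul_eq_zero.mp hcc).resolve_left hc
  have ha'0 : a' = 0 := by rw [hc'0] at hC3; linear_combination -hC3
  rw [ha'0, hc'0] at hC0; norm_num at hC0

private lemma L5 (a' c c' : ℂ) (hB : ¬(a' = 0 ∧ c' = 0))
    (H : ∀ s t : ℂ, (t*a')^4 + (t*a')^3*(s*c+t*c') - (t*a')*s^3 + s^4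
      + (s*c+t*c')^4 = 0) : False := by
  obtain ⟨hC4, hC3, hC2, hC1, hC0⟩ := bqz (a'^4 + a'^3*c' + c'^4)
    (a'^3*c + 4*c*c'^3) (6*c^2*c'^2) (-a' + 4*c^3*c') (1 + c^4)
    (fun s t => by linear_combination H s t)
  have hc : c ≠ 0 := by intro h; rw [h] at hC4; norm_num at hC4
  have h2 : (c*c')^2 = 0 := by linear_combination (1/6) * hC2
  have hcc : c * c' = 0 := pow_eq_zero_iff (by norm_num : (2:ℕ) ≠ 0) |>.mp h2
  have hc'0 : c' = 0 := (mul_eq_zero.mp hcc).resolve_left hc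
  have ha'0 : a' = 0 := by rw [hc'0] at hC3; linear_combination -hC3
  exact hB ⟨ha'0, hc'0⟩

private lemma L1 (b c b' c' : ℂ)
    (H : ∀ s t : ℂ, s^4 + s^3*(s*c+t*c') - s*(s*b+t*b')^3 + (s*b+t*b')^4
      + (s*c+t*c')^4 + t^4 = 0) : False := by
  obtain ⟨hC4, hC3, hC2, hC1, hC0⟩ := bqz (b'^4 + c'^4 + 1)
    (-b'^3 + 4*b*b'^3 + 4*c*c'^3) (-3*b*b'^2 + 6*b^2*b'^2 + 6*c^2*c'^2)
    (c' - 3*b^2*b' + 4*b^3*b' + 4*c^3*c') (1 + c - b^3 + b^4 + c^4)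
    (fun s t => by linear_combination H s t)
  by_cases hb' : b' = 0
  · subst hb'
    have hc' : c' ≠ 0 := by intro h; rw [h] at hC0; norm_num at hC0
    have h1 : 1 + 4*c^3 = 0 := by
      have h : c' * (1 + 4*c^3) = 0 := by linear_combination hC3
      exact (mul_eq_zero.mp h).resolve_left hc'
    have h2 : (c*c')^2 = 0 := by linear_combination (1/6) * hC2
    have hcc : c * c' = 0 := pow_eq_zero_iff (by norm_num : (2:ℕ) ≠ 0) |>.mp h2
    have hc0 : c = 0 := (mul_eq_zero.mp hcc).resolve_right hc'
    rw [hc0] at h1; norm_num at h1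
  · by_cases hc' : c' = 0
    · subst hc'
      have h1 : 4*b - 1 = 0 := by
        have h : b'^3 * (4*b - 1) = 0 := by linear_combination hC1
        exact (mul_eq_zero.mp h).resolve_left (pow_ne_zero 3 hb')
      have h2 : 6*b^2 - 3*b = 0 := by
        have h : b'^2 * (6*b^2 - 3*b) = 0 := by linear_combination hC2
        exact (mul_eq_zero.mp h).resolve_left (pow_ne_zero 2 hb')
      have : (-3/8 : ℂ) = 0 := by linear_combination h2 - (3*b/2 - 3/8) * h1
      norm_num at this
    · obtain ⟨r, hr⟩ : ∃ r : ℂ, c' = r * b' := ⟨c'/b', (div_mul_cancel₀ c' hb').symm⟩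
      rw [hr] at hC0 hC1 hC2 hC3
      have hlin : 4*b - 1 + 4*c*r^3 = 0 := by
        have h : b'^3 * (4*b - 1 + 4*c*r^3) = 0 := by linear_combination hC1
        exact (mul_eq_zero.mp h).resolve_left (pow_ne_zero 3 hb')
      have hP1 : 16*c^2*r^6 + 16*c^2*r^2 - 1 = 0 := by
        have h : b'^2 * (16*c^2*r^6 + 16*c^2*r^2 - 1) = 0 := by
          linear_combination (8/3) * hC2 + ((-4)*b*b'^2 + 4*c*b'^2*r^3 + b'^2) * hlin
        exact (mul_eq_zero.mp h).resolve_left (pow_ne_zero 2 hb')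
      have hP2 : 32*c^3*r - 32*c^3*r^9 + 8*r - 1 + 6*c*r^3 = 0 := by
        have h : b' * (32*c^3*r - 32*c^3*r^9 + 8*r - 1 + 6*c*r^3) = 0 := by
          linear_combination 8 * hC3 + ((-8)*b^2*b' + 8*b*c*b'*r^3 + 4*b*b' + (-8)*c^2*b'*r^6 + (-2)*c*b'*r^3 + b') * hlin
        exact (mul_eq_zero.mp h).resolve_left hb'
      have hP3 : 256 + 256*c + 256*c^4 - 4*(1-4*c*r^3)^3 + (1-4*c*r^3)^4 = 0 := by
        linear_combination 256 * hC4 + ((-64)*b^3 + 64*b^2*c*r^3 + 48*b^2 + (-64)*b*c^2*r^6 + (-32)*b*c*r^3 + 12*b + 64*c^3*r^9 + 16*c^2*r^6 + (-20)*c*r^3 + 3) * hlin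
      have hone : (1:ℂ) = 0 := by
        linear_combination (((-30444179035398116665720832)/62055129305397845839)*c^7*r^50 + ((-117696276053994871445258240)/62055129305397845839)*c^7*r^49 + (30466303950957426841223168/62055129305397845839)*c^7*r^48 + ((-405618136638387069816668160)/62055129305397845839)*c^7*r^47 + ((-1019336021672992784143876096)/62055129305397845839)*c^7*r^46 + ((-221834139413386830771388416)/62055129305397845839)*c^7*r^45 + ((-1177667140178781616912465920)/62055129305397845839)*c^7*r^44 + ((-1269141036360792827972550656)/62055129305397845839)*c^7*r^43 + ((-3731342041099107560182513664)/62055129305397845839)*c^7*r^42 + (266135261199570261450424320/62055129305397845839)*c^7*r^41 + ((-5005377304318410986897801216)/62055129305397845839)*c^7*r^40 + ((-1022014861623968713748250624)/62055129305397845839)*c^7*r^39 + ((-5366321087880881018194886656)/62055129305397845839)*c^7*r^38 + (811260641798257053165158400/62055129305397845839)*c^7*r^37 + ((-7605045432515721814800859136)/62055129305397845839)*c^7*r^36 + (85370047705924958582472704/62055129305397845839)*c^7*r^35 + ((-4370597413284770388012695552)/62055129305397845839)*c^7*r^34 + (515327793622002138322305024/62055129305397845839)*c^7*r^33 + ((-6285604484720530992194912256)/62055129305397845839)*c^7*r^32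 + ((-271225627616166692761108480)/62055129305397845839)*c^7*r^31 + ((-4432572608501087252261109760)/62055129305397845839)*c^7*r^30 + (421122459254838396793651200/62055129305397845839)*c^7*r^29 + ((-6265092476675863314517983232)/62055129305397845839)*c^7*r^28 + ((-675211681689885662553047040)/62055129305397845839)*c^7*r^27 + ((-5274258175490673167487205376)/62055129305397845839)*c^7*r^26 + (905465976165420794693812224/62055129305397845839)*c^7*r^25 + ((-7625557440560389492477788160)/62055129305397845839)*c^7*r^24 + (489356101779643928374411264/62055129305397845839)*c^7*r^23 + ((-3346246772082795772792274944)/62055129305397845839)*c^7*r^22 + (737161933035388969093693440/62055129305397845839)*c^7*r^21 + ((-5107937344541749375282446336)/62055129305397845839)*c^7*r^20 + (997915408744626135211442176/62055129305397845839)*c^7*r^19 + ((-701230567401979692078596096)/62055129305397845839)*c^7*r^18 + (154987198055268135343226880/62055129305397845839)*c^7*r^17 + ((-1259715172357452327620182016)/62055129305397845839)*c^7*r^16 + (346803179934083051195203584/62055129305397845839)*c^7*r^15 + (61618733354809734041960448/62055129305397845839)*c^7*r^14 + ((-23490941686831129916604416)/62055129305397845839)*c^7*r^13 + (9954295906289749164294144/62055129305397845839)*c^7*r^12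 + ((-1632082564668100024729600)/62055129305397845839)*c^7*r^11 + (5014619528981831076544512/62055129305397845839)*c^7*r^10 + (235942387524335404159336448/62055129305397845839)*c^6*r^47 + (912146139418460253700751360/62055129305397845839)*c^6*r^46 + ((-692776541150891808005292032)/62055129305397845839)*c^6*r^45 + ((-623608353439849451370840064)/62055129305397845839)*c^6*r^44 + (593582681213631712416759808/62055129305397845839)*c^6*r^43 + (1196250965904723968448790528/62055129305397845839)*c^6*r^42 + ((-2912162807019821462190030848)/62055129305397845839)*c^6*r^41 + ((-3394850447186187920131227648)/62055129305397845839)*c^6*r^40 + (49844420237508158239539200/62055129305397845839)*c^6*r^39 + ((-5517539339009491971837001728)/62055129305397845839)*c^6*r^38 + ((-4245775281694082138451738624)/62055129305397845839)*c^6*r^37 + ((-5242748461441228712281374720)/62055129305397845839)*c^6*r^36 + ((-812180211461975841812250624)/62055129305397845839)*c^6*r^35 + ((-12484015815446466774532751360)/62055129305397845839)*c^6*r^34 + ((-1786133389710383291645296640)/62055129305397845839)*c^6*r^33 + (2576648074252939207261552640/62055129305397845839)*c^6*r^32 + ((-482213622753692434120835072)/62055129305397845839)*c^6*r^31 + ((-1599065444519476234008494080)/62055129305397845839)*c^6*r^30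 + (1315205373420879598121385984/62055129305397845839)*c^6*r^29 + (16533356074504440914973294592/62055129305397845839)*c^6*r^28 + ((-359389719744418330596605952)/62055129305397845839)*c^6*r^27 + (17309993395398540163762282496/62055129305397845839)*c^6*r^26 + (1336861698149518468258463744/62055129305397845839)*c^6*r^25 + (19409672185548805269476081664/62055129305397845839)*c^6*r^24 + ((-1182111993073849409852669952)/62055129305397845839)*c^6*r^23 + (19033204429276782712313589760/62055129305397845839)*c^6*r^22 + (186972387039396894527717376/62055129305397845839)*c^6*r^21 + (9605762279173431391052365824/62055129305397845839)*c^6*r^20 + ((-1109087014480267034905804800)/62055129305397845839)*c^6*r^19 + (7982889378664678130780725248/62055129305397845839)*c^6*r^18 + ((-76876248367203824430481408)/62055129305397845839)*c^6*r^17 + (1551287462590662153525526528/62055129305397845839)*c^6*r^16 + ((-295141063392574088686075904)/62055129305397845839)*c^6*r^15 + (1180585048740207660081790976/62055129305397845839)*c^6*r^14 + ((-1936684563192656199417856)/62055129305397845839)*c^6*r^13 + ((-130004263590575432241512448)/62055129305397845839)*c^6*r^12 + (13394393014757124637196288/62055129305397845839)*c^6*r^11 + (3958731575372022215032832/62055129305397845839)*c^6*r^10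 + (-4096)*c^6*r^6 + (9513805948561911458037760/62055129305397845839)*c^5*r^44 + (950105457328816897298268160/62055129305397845839)*c^5*r^43 + (3635533233017914884966318080/62055129305397845839)*c^5*r^42 + ((-317330997781060343625154560)/62055129305397845839)*c^5*r^41 + (5170391282546838938649624576/62055129305397845839)*c^5*r^40 + (2987896247563256570757775360/62055129305397845839)*c^5*r^39 + (14905716356625668110378074112/62055129305397845839)*c^5*r^38 + ((-1443527586685196223425544192)/62055129305397845839)*c^5*r^37 + (20542163784366976723308773376/62055129305397845839)*c^5*r^36 + (1571108811652811008074252288/62055129305397845839)*c^5*r^35 + (19253987021506303315540967424/62055129305397845839)*c^5*r^34 + ((-1999121889253286546053791744)/62055129305397845839)*c^5*r^33 + (25863835521103777362331303936/62055129305397845839)*c^5*r^32 + ((-3888179016883755040738443264)/62055129305397845839)*c^5*r^31 + (1076931518558523677761863680/62055129305397845839)*c^5*r^30 + ((-1068873665525034241228800)/62055129305397845839)*c^5*r^29 + (1077357582916044203668930560/62055129305397845839)*c^5*r^28 + ((-4755653540268148121349668864)/62055129305397845839)*c^5*r^27 + ((-17361060661339817913510264832)/62055129305397845839)*c^5*r^26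 + (2222919524617926036920205312/62055129305397845839)*c^5*r^25 + ((-23917355786663335885905969152)/62055129305397845839)*c^5*r^24 + ((-88973930395470646921218048)/62055129305397845839)*c^5*r^23 + ((-13244028833713592425959129088)/62055129305397845839)*c^5*r^22 + (1672858708303712145902665728/62055129305397845839)*c^5*r^21 + ((-19397235461161564370977914880)/62055129305397845839)*c^5*r^20 + (1961328205688226208248459264/62055129305397845839)*c^5*r^19 + ((-2381099705473769213429022720)/62055129305397845839)*c^5*r^18 + (228387196828196994149253120/62055129305397845839)*c^5*r^17 + ((-4914548076357646475994071040)/62055129305397845839)*c^5*r^16 + (719964626787602394931888128/62055129305397845839)*c^5*r^15 + (409160348842811008498794496/62055129305397845839)*c^5*r^14 + ((-93465475427241591867703296)/62055129305397845839)*c^5*r^13 + ((-28228187572682984121860096)/62055129305397845839)*c^5*r^12 + (3701697943877373609234432/62055129305397845839)*c^5*r^11 + (419502602779297111605248/62055129305397845839)*c^5*r^10 + ((-57061886026845022322688)/62055129305397845839)*c^5*r^9 + (1248583867701544255078400/62055129305397845839)*c^5*r^8 + ((-117294726049912149456896)/62055129305397845839)*c^5*r^7 + ((-77537518480779578383007744)/62055129305397845839)*c^4*r^41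 + ((-299757703075018188212142080)/62055129305397845839)*c^4*r^40 + (134676703566466165234466816/62055129305397845839)*c^4*r^39 + ((-238695675451368423559790592)/62055129305397845839)*c^4*r^38 + ((-447774495947113298542592000)/62055129305397845839)*c^4*r^37 + ((-883085491662433519210987520)/62055129305397845839)*c^4*r^36 + (27911034594457013165752320/62055129305397845839)*c^4*r^35 + ((-1658638204272911863871438848)/62055129305397845839)*c^4*r^34 + ((-728040715451753006742175744)/62055129305397845839)*c^4*r^33 + ((-1476216355613671323578875904)/62055129305397845839)*c^4*r^32 + ((-889400355125065254855770112)/62055129305397845839)*c^4*r^31 + ((-4096205702879952465491853312)/62055129305397845839)*c^4*r^30 + ((-27180843525295693886439424)/62055129305397845839)*c^4*r^29 + ((-2985022280005231698887139328)/62055129305397845839)*c^4*r^28 + ((-1144948484847061000508637184)/62055129305397845839)*c^4*r^27 + ((-4571390789065258285100105728)/62055129305397845839)*c^4*r^26 + (929826251253277077394456576/62055129305397845839)*c^4*r^25 + ((-4347801151514340049282439168)/62055129305397845839)*c^4*r^24 + (158745678925233026631860224/62055129305397845839)*c^4*r^23 + ((-2145988417076009491542900736)/62055129305397845839)*c^4*r^22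 + (761322165694853811447218176/62055129305397845839)*c^4*r^21 + ((-2943811626746723774725413888)/62055129305397845839)*c^4*r^20 + (861469650586346806827220992/62055129305397845839)*c^4*r^19 + ((-104713666021062355630620672)/62055129305397845839)*c^4*r^18 + (121597388660686057572941824/62055129305397845839)*c^4*r^17 + ((-603185075811972797160621056)/62055129305397845839)*c^4*r^16 + (338639383235555728356409344/62055129305397845839)*c^4*r^15 + (143043779846740732116205568/62055129305397845839)*c^4*r^14 + ((-39685466050564117904719872)/62055129305397845839)*c^4*r^13 + (85194319826783032618925312/62055129305397845839)*c^4*r^12 + ((-1770789731553154117369856)/62055129305397845839)*c^4*r^11 + ((-3103356201357143876173824)/62055129305397845839)*c^4*r^10 + (835954190450151271251968/62055129305397845839)*c^4*r^9 + (219321314294216180928000/62055129305397845839)*c^4*r^8 + (-256)*c^4*r^4 + (-16)*c^2*r^6 + (-16)*c^2*r^2 + (-1)) * hP1 + (((-228331342765485874992906240)/62055129305397845839)*c^5*r^42 + ((-939804906096333004587663360)/62055129305397845839)*c^5*r^41 + ((-6453946891902549837742080)/62055129305397845839)*c^5*r^40 + ((-1213293247007566896557981696)/62055129305397845839)*c^5*r^39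 + ((-1221962935459974301228204032)/62055129305397845839)*c^5*r^38 + ((-5154540479137651116541476864)/62055129305397845839)*c^5*r^37 + ((-11413736815036982456483840)/62055129305397845839)*c^5*r^36 + ((-6648734886660662225558044672)/62055129305397845839)*c^5*r^35 + ((-2677237139213939710017667072)/62055129305397845839)*c^5*r^34 + ((-11557474262933661302399172608)/62055129305397845839)*c^5*r^33 + (14523130657298923311333376/62055129305397845839)*c^5*r^32 + ((-15066500387990310175866617856)/62055129305397845839)*c^5*r^31 + ((-3043583286790705919462735872)/62055129305397845839)*c^5*r^30 + ((-13417955369500333372348563456)/62055129305397845839)*c^5*r^29 + (36569376713612310247636992/62055129305397845839)*c^5*r^28 + ((-18049555050793503786168647680)/62055129305397845839)*c^5*r^27 + ((-1849576362413078942606163968)/62055129305397845839)*c^5*r^26 + ((-8294736160030279607830183936)/62055129305397845839)*c^5*r^25 + ((-1337207141431279548628992)/62055129305397845839)*c^5*r^24 + ((-12042406027588449150702211072)/62055129305397845839)*c^5*r^23 + ((-525067819792159232766246912)/62055129305397845839)*c^5*r^22 + ((-2369034175367869933776011264)/62055129305397845839)*c^5*r^21 + ((-42520219976118159380840448)/62055129305397845839)*c^5*r^20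 + ((-4242909250430348025958414336)/62055129305397845839)*c^5*r^19 + ((-22965111821823413015019520)/62055129305397845839)*c^5*r^18 + ((-86938008113695660761415680)/62055129305397845839)*c^5*r^17 + ((-30668569945632784173760512)/62055129305397845839)*c^5*r^16 + ((-623557977502768030444636160)/62055129305397845839)*c^5*r^15 + (12551190846339547705901056/62055129305397845839)*c^5*r^14 + (62557244847692874921279488/62055129305397845839)*c^5*r^13 + ((-6568825582865741276250112)/62055129305397845839)*c^5*r^12 + ((-4441157478530303736883200)/62055129305397845839)*c^5*r^11 + (47105017828034880471040/62055129305397845839)*c^5*r^10 + ((-19441984191972166336512)/62055129305397845839)*c^5*r^9 + (3187661259117382860800/62055129305397845839)*c^5*r^8 + (117294726049912149456896/62055129305397845839)*c^5*r^7 + (456662685530971749985812480/62055129305397845839)*c^4*r^40 + (1822526976501294540427100160/62055129305397845839)*c^4*r^39 + ((-222043332740278151471431680)/62055129305397845839)*c^4*r^38 + (2424973007292158155656527872/62055129305397845839)*c^4*r^37 + (1912271216402571003324006400/62055129305397845839)*c^4*r^36 + (9092326736159661387562352640/62055129305397845839)*c^4*r^35 + ((-1154785979784199738486685696)/62055129305397845839)*c^4*r^34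 + (12082129835471486127673704448/62055129305397845839)*c^4*r^33 + (2736154948561428361983819776/62055129305397845839)*c^4*r^32 + (17899475872984006983512752128/62055129305397845839)*c^4*r^31 + ((-2341021837155913302979117056)/62055129305397845839)*c^4*r^30 + (24095566640909202018724216832/62055129305397845839)*c^4*r^29 + (952464002303120113966907392/62055129305397845839)*c^4*r^28 + (17125276980810986773075066880/62055129305397845839)*c^4*r^27 + ((-2257116677224351312092856320)/62055129305397845839)*c^4*r^26 + (24060469125310809640537096192/62055129305397845839)*c^4*r^25 + ((-1289468039023778118313287680)/62055129305397845839)*c^4*r^24 + (7564439739051796093471293440/62055129305397845839)*c^4*r^23 + ((-942451287112531686813859840)/62055129305397845839)*c^4*r^22 + (12054243190736135661248716800/62055129305397845839)*c^4*r^21 + ((-1315731847800904762986415104)/62055129305397845839)*c^4*r^20 + (824581526261802012624814080/62055129305397845839)*c^4*r^19 + ((-35992460333465321275392000)/62055129305397845839)*c^4*r^18 + (2448066850498598681447260160/62055129305397845839)*c^4*r^17 + ((-356931165063487798966356992)/62055129305397845839)*c^4*r^16 + ((-244156024858965538043330560)/62055129305397845839)*c^4*r^15 + (57598868029574313794863104/62055129305397845839)*c^4*r^14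 + (15415387269828524122202112/62055129305397845839)*c^4*r^13 + ((-2526293536627203539782656)/62055129305397845839)*c^4*r^12 + (101320445681906105581568/62055129305397845839)*c^4*r^11 + ((-22471637132455614611456)/62055129305397845839)*c^4*r^10 + ((-467585073570089906397184)/62055129305397845839)*c^4*r^9 + (58647363024956074728448/62055129305397845839)*c^4*r^8) * hP2 + ((1902761189712382291607552/62055129305397845839)*c^5*r^44 + (7356017253374679465328640/62055129305397845839)*c^5*r^43 + ((-1904143996934839177576448)/62055129305397845839)*c^5*r^42 + (25351133539899191863541760/62055129305397845839)*c^5*r^41 + (65611262544274431300599808/62055129305397845839)*c^5*r^40 + (21220650966711356388540416/62055129305397845839)*c^5*r^39 + (71700052264239011879452672/62055129305397845839)*c^5*r^38 + (104672448312448743611826176/62055129305397845839)*c^5*r^37 + (296917378923256271520399360/62055129305397845839)*c^5*r^36 + ((-2768820111636464417439744)/62055129305397845839)*c^5*r^35 + (386440277781074537738141696/62055129305397845839)*c^5*r^34 + (143197243624047596357550080/62055129305397845839)*c^5*r^33 + (566701184371536903856979968/62055129305397845839)*c^5*r^32 + ((-74693261190738886628802560)/62055129305397845839)*c^5*r^31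 + (790055565049068139283742720/62055129305397845839)*c^5*r^30 + (33189167329978542834319360/62055129305397845839)*c^5*r^29 + (542946143778578781587374080/62055129305397845839)*c^5*r^28 + ((-104132428180477555856506880)/62055129305397845839)*c^5*r^27 + (796465567563026788557783040/62055129305397845839)*c^5*r^26 + ((-93056474568058635225661440)/62055129305397845839)*c^5*r^25 + (253280747438359830996713472/62055129305397845839)*c^5*r^24 + ((-55759320693166069027307520)/62055129305397845839)*c^5*r^23 + (397978282306200106431414272/62055129305397845839)*c^5*r^22 + ((-84044911792419324150415360)/62055129305397845839)*c^5*r^21 + (39975739627948122377289728/62055129305397845839)*c^5*r^20 + ((-8218516023027312839163904)/62055129305397845839)*c^5*r^19 + (78110054778197661153492992/62055129305397845839)*c^5*r^18 + ((-21573193585588434448154624)/62055129305397845839)*c^5*r^17 + ((-4164584555236972819906560)/62055129305397845839)*c^5*r^16 + (1468183855426945619787776/62055129305397845839)*c^5*r^15 + ((-622143494143109322768384)/62055129305397845839)*c^5*r^14 + (102005160291756251545600/62055129305397845839)*c^5*r^13 + ((-313413720561364442284032)/62055129305397845839)*c^5*r^12 + ((-14746399220270962759958528)/62055129305397845839)*c^4*r^41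 + ((-57009133713653765856296960)/62055129305397845839)*c^4*r^40 + (14757115976245003626217472/62055129305397845839)*c^4*r^39 + ((-78500091172051034862780416)/62055129305397845839)*c^4*r^38 + ((-52652060157610763515723776)/62055129305397845839)*c^4*r^37 + ((-283436474958644875954094080)/62055129305397845839)*c^4*r^36 + (72563342328172791733682176/62055129305397845839)*c^4*r^35 + ((-393163884853079053848805376)/62055129305397845839)*c^4*r^34 + ((-41640910942575864723079168)/62055129305397845839)*c^4*r^33 + ((-561011337513534777982992384)/62055129305397845839)*c^4*r^32 + (141257905988562245662015488/62055129305397845839)*c^4*r^31 + ((-787358737815452497700651008)/62055129305397845839)*c^4*r^30 + (65014520865450377126887424/62055129305397845839)*c^4*r^29 + ((-549544561755691722409172992)/62055129305397845839)*c^4*r^28 + (134534632070192633475530752/62055129305397845839)*c^4*r^27 + ((-787795495924016153049366528)/62055129305397845839)*c^4*r^26 + (139549563987171192349556736/62055129305397845839)*c^4*r^25 + ((-261473466810088881088403456)/62055129305397845839)*c^4*r^24 + (60327255790028785038000128/62055129305397845839)*c^4*r^23 + ((-393369111581334491969748992)/62055129305397845839)*c^4*r^22 + (92258577623866512160423936/62055129305397845839)*c^4*r^21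 + ((-42909864366174089481068544)/62055129305397845839)*c^4*r^20 + (7802335413106211026305024/62055129305397845839)*c^4*r^19 + ((-77965379171317459005865984)/62055129305397845839)*c^4*r^18 + (21443136599475047947632640/62055129305397845839)*c^4*r^17 + (3925422758878512680710144/62055129305397845839)*c^4*r^16 + ((-1447856070592902450774016)/62055129305397845839)*c^4*r^15 + (305610868449355149934592/62055129305397845839)*c^4*r^14 + ((-16046365564102630293504)/62055129305397845839)*c^4*r^13 + (323610074457718427205632/62055129305397845839)*c^4*r^12 + ((-5888127228504360058880)/62055129305397845839)*c^4*r^11 + (2430248023996520792064/62055129305397845839)*c^4*r^10 + ((-398457657389672857600)/62055129305397845839)*c^4*r^9 + (1224272345942829852672/62055129305397845839)*c^4*r^8) * hP3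
      exact one_ne_zero hone

private lemma L4 (b c b' c' : ℂ) (hB : ¬(b' = 0 ∧ c' = 0))
    (H : ∀ s t : ℂ, s^4 + s^3*(s*c+t*c') - s*(s*b+t*b')^3 + (s*b+t*b')^4
      + (s*c+t*c')^4 = 0) : False := by
  obtain ⟨hC4, hC3, hC2, hC1, hC0⟩ := bqz (b'^4 + c'^4)
    (-b'^3 + 4*b*b'^3 + 4*c*c'^3) (-3*b*b'^2 + 6*b^2*b'^2 + 6*c^2*c'^2)
    (c' - 3*b^2*b' + 4*b^3*b' + 4*c^3*c') (1 + c - b^3 + b^4 + c^4)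
    (fun s t => by linear_combination H s t)
  by_cases hb' : b' = 0
  · subst hb'
    have h2 : c'^4 = 0 := by linear_combination hC0
    exact hB ⟨rfl, pow_eq_zero_iff (by norm_num : (4:ℕ) ≠ 0) |>.mp h2⟩
  · obtain ⟨r, hr⟩ : ∃ r : ℂ, c' = r * b' := ⟨c'/b', (div_mul_cancel₀ c' hb').symm⟩
    rw [hr] at hC0 hC1 hC2 hC3
    have hr4 : r^4 + 1 = 0 := by
      have h : b'^4 * (r^4 + 1) = 0 := by linear_combination hC0
      exact (mul_eq_zero.mp h).resolve_left (pow_ne_zero 4 hb')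
    have hlin : 4*b - 1 + 4*c*r^3 = 0 := by
      have h : b'^3 * (4*b - 1 + 4*c*r^3) = 0 := by linear_combination hC1
      exact (mul_eq_zero.mp h).resolve_left (pow_ne_zero 3 hb')
    have hP1 : 16*c^2*r^6 + 16*c^2*r^2 - 1 = 0 := by
      have h : b'^2 * (16*c^2*r^6 + 16*c^2*r^2 - 1) = 0 := by
        linear_combination (8/3) * hC2 + ((-4)*b*b'^2 + 4*c*b'^2*r^3 + b'^2) * hlin
      exact (mul_eq_zero.mp h).resolve_left (pow_ne_zero 2 hb')
    have hone : (1:ℂ) = 0 := by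
      linear_combination (-1) * hP1 + (16*c^2*r^2) * hr4
    exact one_ne_zero hone

private lemma lemW (a b c a' b' c' d' : ℂ) (hd' : d' ≠ 0)
    (hA : ¬(a = 0 ∧ b = 0 ∧ c = 0))
    (H : ∀ s t : ℂ, (s*a+t*a')^4 + (s*a+t*a')^3*(s*c+t*c')
      - (s*a+t*a')*(s*b+t*b')^3 + (s*b+t*b')^4 + (s*c+t*c')^4 + (t*d')^4 = 0) :
    False := by
  have H1 : ∀ s t : ℂ, (s*a+t*(a'/d'))^4 + (s*a+t*(a'/d'))^3*(s*c+t*(c'/d'))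
      - (s*a+t*(a'/d'))*(s*b+t*(b'/d'))^3 + (s*b+t*(b'/d'))^4
      + (s*c+t*(c'/d'))^4 + t^4 = 0 := by
    intro s t
    have h3 := H s (t/d')
    rw [div_mul_cancel₀ t hd'] at h3
    linear_combination h3
  by_cases ha : a = 0
  · by_cases hb : b = 0
    · by_cases hc : c = 0
      · exact hA ⟨ha, hb, hc⟩
      · subst ha hb
        exact L3 (a'/d') (b'/d') c (c'/d') 1 hc (fun s t => by linear_combination H1 s t)
    · subst ha
      refine L2 (a'/d') (c/b) (c'/d' - (b'/d')*(c/b)) (fun s t => ?_)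
      have h3 := H1 ((s - t*(b'/d'))/b) t
      rw [div_mul_cancel₀ (s - t*(b'/d')) hb] at h3
      linear_combination h3
  · refine L1 (b/a) (c/a) (b'/d' - (a'/d')*(b/a)) (c'/d' - (a'/d')*(c/a)) (fun s t => ?_)
    have h3 := H1 ((s - t*(a'/d'))/a) t
    rw [div_mul_cancel₀ (s - t*(a'/d')) ha] at h3
    linear_combination h3

private lemma main2 (a b c d a' b' c' d' : ℂ) (hd' : d' ≠ 0)
    (hind : ∀ x y : ℂ, x*a + y*a' = 0 → x*b + y*b' = 0 → x*c + y*c' = 0 →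
      x*d + y*d' = 0 → x = 0 ∧ y = 0)
    (H : ∀ s t : ℂ, (s*a+t*a')^4 + (s*a+t*a')^3*(s*c+t*c')
      - (s*a+t*a')*(s*b+t*b')^3 + (s*b+t*b')^4 + (s*c+t*c')^4
      + (s*d+t*d')^4 = 0) : False := by
  have hA : ¬(d'*a - d*a' = 0 ∧ d'*b - d*b' = 0 ∧ d'*c - d*c' = 0) := by
    rintro ⟨h1, h2, h3⟩
    have h := hind d' (-d) (by linear_combination h1) (by linear_combination h2)
      (by linear_combination h3) (by ring)
    exact hd' h.1
  exact lemW (d'*a - d*a') (d'*b - d*b') (d'*c - d*c') a' b' c' d' hd' hA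
    (fun s t => by linear_combination H (s*d') (t - s*d))

private lemma mainS (a b c d a' b' c' d' : ℂ)
    (hind : ∀ x y : ℂ, x*a + y*a' = 0 → x*b + y*b' = 0 → x*c + y*c' = 0 →
      x*d + y*d' = 0 → x = 0 ∧ y = 0)
    (H : ∀ s t : ℂ, (s*a+t*a')^4 + (s*a+t*a')^3*(s*c+t*c')
      - (s*a+t*a')*(s*b+t*b')^3 + (s*b+t*b')^4 + (s*c+t*c')^4
      + (s*d+t*d')^4 = 0) : False := by
  by_cases hd' : d' = 0
  · by_cases hd : d = 0
    · subst hd hd'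
      by_cases ha : a = 0
      · by_cases hb : b = 0
        · by_cases hc : c = 0
          · exact one_ne_zero
              (hind 1 0 (by simp [ha]) (by simp [hb]) (by simp [hc]) (by simp)).1
          · subst ha hb
            exact L3 a' b' c c' 0 hc (fun s t => by linear_combination H s t)
        · subst ha
          refine L5 a' (c/b) (c' - b'*(c/b)) ?_ (fun s t => ?_)
          · rintro ⟨h1, h2⟩
            have h2' : c' = b' * c / b := by rw [← sub_eq_zero]; linear_combination h2
            have e2 : c' * b = b' * c := by rw [h2', div_mul_cancel₀ _ hb]
            obtain ⟨hx, hy⟩ := hind b' (-b) (by simp [h1]) (by ring)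
              (by linear_combination -e2) (by simp)
            exact hb (neg_eq_zero.mp hy)
          · have h3 := H ((s - t*b')/b) t
            rw [div_mul_cancel₀ (s - t*b') hb] at h3
            linear_combination h3
      · refine L4 (b/a) (c/a) (b' - a'*(b/a)) (c' - a'*(c/a)) ?_ (fun s t => ?_)
        · rintro ⟨h1, h2⟩
          have h1' : b' = a' * b / a := by rw [← sub_eq_zero]; linear_combination h1
          have e1 : b' * a = a' * b := by rw [h1', div_mul_cancel₀ _ ha]
          have h2' : c' = a' * c / a := by rw [← sub_eq_zero]; linear_combination h2
          have e2 : c' * a = a' * c := by rw [h2', div_mul_cancel₀ _ ha]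
          obtain ⟨hx, hy⟩ := hind a' (-a) (by ring) (by linear_combination -e1)
            (by linear_combination -e2) (by simp)
          exact ha (neg_eq_zero.mp hy)
        · have h3 := H ((s - t*a')/a) t
          rw [div_mul_cancel₀ (s - t*a') ha] at h3
          linear_combination h3
    · subst hd'
      exact main2 a' b' c' 0 a b c d hd
        (fun x y h1 h2 h3 h4 => ⟨(hind y x (by linear_combination h1)
          (by linear_combination h2) (by linear_combination h3)
          (by linear_combination h4)).2,
          (hind y x (by linear_combination h1) (by linear_combination h2)
          (by linear_combination h3) (by linear_combination h4)).1⟩)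
        (fun s t => by linear_combination H t s)
  · exact main2 a b c d a' b' c' d' hd' hind H

/-- The quartic surface `Z(x⁴ + x³z − xy³ + y⁴ + z⁴ + w⁴) ⊂ ℙ³_ℂ` contains no lines:
for every pair of ℂ-linearly independent vectors `u, v ∈ ℂ⁴`, the polynomial does not
vanish identically on the plane spanned by `u` and `v`. -/
theorem quartic_contains_no_lines
    (f : (Fin 4 → ℂ) → ℂ)
    (hf : f = fun p => p 0 ^ 4 + p 0 ^ 3 * p 2 - p 0 * p 1 ^ 3 + p 1 ^ 4
      + p 2 ^ 4 + p 3 ^ 4)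
    (u v : Fin 4 → ℂ) (huv : LinearIndependent ℂ ![u, v]) :
    ∃ s t : ℂ, f (s • u + t • v) ≠ 0 := by
  by_contra hcon
  push_neg at hcon
  have hpair := LinearIndependent.pair_iff.mp huv
  refine mainS (u 0) (u 1) (u 2) (u 3) (v 0) (v 1) (v 2) (v 3) ?_ ?_
  · intro x y h0 h1 h2 h3
    refine hpair x y (funext fun i => ?_)
    fin_cases i
    · simpa using h0
    · simpa using h1
    · simpa using h2
    · simpa using h3
  · intro s t
    have h := hcon s t
    rw [hf] at h
    simp only [Pi.add_apply, Pi.smul_apply, smul_eq_mul] at h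
    linear_combination h
end

section
/- Let a ∈ ℂ satisfy 25a³ + 4a + 20 = 0, and let f(x,y,z,w) = 5x⁴ − 4x²zw + 8y⁴ − 5z⁴ + 4zw³. Then the restriction of f to the plane z = −a·w factors as a product of two quadratic forms: there exist homogeneous polynomials q₁, q₂ of degree 2 in ℂ[x,y,w] such that f(x, y, −a·w, w) = q₁(x,y,w)·q₂(x,y,w) as polynomials in x, y, w. (Concretely, f(x,y,−a·w,w) = 5(x² + (2a/5)w²)² + 8y⁴; this is the claim, in the proof of Proposition 3.2 of the paper, that each of the three planes Z(z + a₃w) with 25a₃³ + 4a₃ + 20 = 0 meets the quartic X in a pair of conics.) -/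
open MvPolynomial

/-- For `a` a root of `25a³ + 4a + 20 = 0`, the restriction of the quartic
`f = 5x⁴ − 4x²zw + 8y⁴ − 5z⁴ + 4zw³` to the plane `z = −a·w` factors as a product of
two quadratic forms in `x, y, w`. -/
theorem restriction_factors_into_conics (a : ℂ)
    (ha : 25 * a ^ 3 + 4 * a + 20 = 0) :
    ∃ q₁ q₂ : MvPolynomial (Fin 3) ℂ,
      q₁.IsHomogeneous 2 ∧ q₂.IsHomogeneous 2 ∧
      MvPolynomial.aeval
          (fun i : Fin 4 => ![X 0, X 1, -(C a) * X 2, X 2] i)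
          (5 * X 0 ^ 4 - 4 * X 0 ^ 2 * X 2 * X 3 + 8 * X 1 ^ 4 - 5 * X 2 ^ 4
            + 4 * X 2 * X 3 ^ 3 : MvPolynomial (Fin 4) ℂ)
        = q₁ * q₂ := by
  set c : ℂ := (Real.sqrt 5 : ℂ) with hcdef
  set e : ℂ := Complex.I * (Real.sqrt 8 : ℂ) with hedef
  set b : ℂ := 2 * a / 5 with hbdef
  have hc : c ^ 2 = 5 := by
    rw [hcdef]; norm_cast
    rw [Real.sq_sqrt] <;> norm_num
  have he : e ^ 2 = -8 := by
    rw [hedef, mul_pow, Complex.I_sq]; norm_cast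
    rw [Real.sq_sqrt] <;> norm_num
  refine ⟨C c * X 0 ^ 2 + C c * C b * X 2 ^ 2 + C e * X 1 ^ 2,
          C c * X 0 ^ 2 + C c * C b * X 2 ^ 2 - C e * X 1 ^ 2, ?_, ?_, ?_⟩
  · exact (((isHomogeneous_C _ _).mul ((isHomogeneous_X _ _).pow 2)).add
      (((isHomogeneous_C _ _).mul (isHomogeneous_C _ _)).mul ((isHomogeneous_X _ _).pow 2))).add
      ((isHomogeneous_C _ _).mul ((isHomogeneous_X _ _).pow 2))
  · exact (((isHomogeneous_C _ _).mul ((isHomogeneous_X _ _).pow 2)).add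
      (((isHomogeneous_C _ _).mul (isHomogeneous_C _ _)).mul ((isHomogeneous_X _ _).pow 2))).sub
      ((isHomogeneous_C _ _).mul ((isHomogeneous_X _ _).pow 2))
  · have hcC : (C c : MvPolynomial (Fin 3) ℂ) ^ 2 = 5 := by
      rw [← C_pow, hc]; simp [map_ofNat]
    have heC : (C e : MvPolynomial (Fin 3) ℂ) ^ 2 = -8 := by
      rw [← C_pow, he]; simp only [map_neg, map_ofNat]
    have hb5 : 5 * b = 2 * a := by rw [hbdef]; field_simp
    have hbC : (5 : MvPolynomial (Fin 3) ℂ) * C b = 2 * C a := by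
      have h := congrArg (C : ℂ → MvPolynomial (Fin 3) ℂ) hb5
      simpa only [map_mul, map_ofNat] using h
    have htC : (5 : MvPolynomial (Fin 3) ℂ) * C (1/5 : ℂ) = 1 := by
      have h := congrArg (C : ℂ → MvPolynomial (Fin 3) ℂ) (by norm_num : (5 : ℂ) * (1/5) = 1)
      simpa only [map_mul, map_ofNat, map_one] using h
    have haC : (C a : MvPolynomial (Fin 3) ℂ) *
        (25 * C a ^ 3 + 4 * C a + 20) = 0 := by
      have h : (C (a * (25 * a ^ 3 + 4 * a + 20)) : MvPolynomial (Fin 3) ℂ) = 0 := by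
        rw [ha, mul_zero, C_0]
      simpa only [map_mul, map_add, map_pow, map_ofNat] using h
    simp only [aeval_def, eval₂_add, eval₂_sub, eval₂_mul, eval₂_pow, eval₂_X,
      eval₂_ofNat, map_ofNat]
    simp only [Matrix.cons_val_zero, Matrix.cons_val_one, Matrix.head_cons,
      Matrix.cons_val_two, Matrix.tail_cons, Matrix.cons_val_three, Matrix.head_fin_const]
    linear_combination (-((X 0 ^ 2 + C b * X 2 ^ 2) ^ 2)) * hcC + X 1 ^ 4 * heC
      + (-2 * X 0 ^ 2 * X 2 ^ 2 - C (1/5) * X 2 ^ 4 * (5 * C b + 2 * C a)) * hbC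
      - C (1/5) * X 2 ^ 4 * haC
      + X 2 ^ 4 * (4 * C a + 5 * C a ^ 4 + 5 * C b ^ 2) * htC
end
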